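/- arXiv:0705.2919 — 10 statements merged into one kernel-verified Lean document; each statement's English description precedes it below -/
import Mathlib

section
/- There do not exist four squares of rational numbers in nontrivial arithmetic progression, i.e., there are no rationals a, b, c, d with a^2, b^2, c^2, d^2 in arithmetic progression with nonzero common difference. -/
/-!
If `a², b², c², d²` are in arithmetic progression with difference `e ≠ 0`, then
`(b² + c²)² - e² = (2bc)²` and `(b² + c²)² - 9e² = (2ad)²`, so `r = e / (b² + c²)` makes
`1 - r²` and `1 - 9r²` rational squares. For `r = n / d` in lowest terms, factoring
`X² - Y² = 8n²` (where `X² = d² - n²`, `Y² = d² - 9n²`) into coprime parts yields coprime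
nonzero integers `s, t` with `s² + t²` and `4s² + t²` both squares, and Fermat's infinite
descent rules such pairs out. For even `s`, factoring `V² - U² = 3s²` (where `U² = s² + t²`,
`V² = 4s² + t²`) gives `t² = (β² - α²)(β² - 9α²)` with coprime factors: if both are positive,
`(α, β)` is a new `(n, d)` as above; if both are negative, `α² - β²` and `9α² - β²` are
squares, and one more factorization of this kind gives a smaller pair.
-/

lemma Int.sq_emod_sixteen (x : ℤ) :
    x ^ 2 % 16 = 0 ∨ x ^ 2 % 16 = 1 ∨ x ^ 2 % 16 = 4 ∨ x ^ 2 % 16 = 9 := by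
  have h : x ^ 2 % 16 = (x % 16) ^ 2 % 16 := by simp [pow_two, Int.mul_emod]
  have h0 : 0 ≤ x % 16 := Int.emod_nonneg x (by norm_num)
  have h1 : x % 16 < 16 := Int.emod_lt_of_pos x (by norm_num)
  rw [h]
  interval_cases x % 16 <;> simp

lemma Int.three_dvd_of_three_dvd_sq_add_sq {a b : ℤ} (h : 3 ∣ a ^ 2 + b ^ 2) :
    3 ∣ a ∧ 3 ∣ b := by
  have hzmod : ∀ x y : ZMod 3, x ^ 2 + y ^ 2 = 0 → x = 0 ∧ y = 0 := by decide
  have h3 := (ZMod.intCast_zmod_eq_zero_iff_dvd _ 3).mpr h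
  push_cast at h3
  have h' := hzmod _ _ h3
  simp only [ZMod.intCast_zmod_eq_zero_iff_dvd] at h'
  exact_mod_cast h'

lemma Int.odd_of_isCoprime_of_even {a b : ℤ} (hab : IsCoprime a b) (ha : Even a) : Odd b :=
  Int.not_even_iff_odd.mp fun hb =>
    Int.prime_two.not_isUnit (hab.isUnit_of_dvd' ha.two_dvd hb.two_dvd)

lemma Int.exists_pos_eq_sq_of_isSquare {x : ℤ} (h : IsSquare x) (hx : x ≠ 0) :
    ∃ r, 0 < r ∧ x = r ^ 2 := by
  obtain ⟨r, rfl⟩ := h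
  exact ⟨|r|, abs_pos.mpr (by rintro rfl; simp at hx), by rw [sq_abs, sq]⟩

lemma Int.isSquare_of_isCoprime_of_mul_eq_sq {a b c : ℤ} (hab : IsCoprime a b)
    (h : a * b = c ^ 2) (ha : 0 ≤ a) : IsSquare a := by
  obtain ⟨r, hr | hr⟩ := Int.sq_of_isCoprime hab h
  · exact ⟨r, hr.trans (sq r)⟩
  · exact ⟨0, by nlinarith [sq_nonneg r]⟩

lemma Int.isCoprime_of_dvd_prime_pow_mul_sq {x y a b q : ℤ} {n : ℕ} (hq : Prime q)
    (hqx : ¬q ∣ x) (hab : IsCoprime a b) (ha : ∀ d, d ∣ x → d ∣ y → d ∣ q ^ n * a ^ 2)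
    (hb : ∀ d, d ∣ x → d ∣ y → d ∣ q ^ n * b ^ 2) : IsCoprime x y := by
  refine isCoprime_of_prime_dvd (fun h => hqx (h.1 ▸ dvd_zero q)) fun p hp hpx hpy => hqx ?_
  obtain ⟨e, f, hef⟩ := (IsCoprime.pow_iff two_pos two_pos).mpr hab
  have hpq : p ∣ q ^ n := by
    simpa only [show e * (q ^ n * a ^ 2) + f * (q ^ n * b ^ 2) = q ^ n by
      linear_combination q ^ n * hef] using (ha p hpx hpy).linear_comb (hb p hpx hpy) e f
  exact (hp.associated_of_dvd hq (hp.dvd_of_dvd_pow hpq)).dvd_iff_dvd_left.mp hpx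

lemma Int.exists_eq_mul_sq_of_mul_eq_mul_sq {k m n w : ℤ} (hk : 0 < k) (hmn : IsCoprime m n)
    (hm : 0 < m) (hn : 0 < n) (h : m * n = k * w ^ 2) (hkm : k ∣ m) :
    ∃ a b, IsCoprime a b ∧ m = k * a ^ 2 ∧ n = b ^ 2 ∧ w ^ 2 = a ^ 2 * b ^ 2 := by
  obtain ⟨m', rfl⟩ := hkm
  have h' : m' * n = w ^ 2 := mul_left_cancel₀ hk.ne' (by linear_combination h)
  have hco : IsCoprime m' n := hmn.of_mul_left_right
  obtain ⟨a, ha⟩ :=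
    Int.isSquare_of_isCoprime_of_mul_eq_sq hco h' (pos_of_mul_pos_right hm hk.le).le
  obtain ⟨b, hb⟩ := Int.isSquare_of_isCoprime_of_mul_eq_sq hco.symm (by rw [mul_comm, h']) hn.le
  refine ⟨a, b, ?_, by rw [ha]; ring, by rw [hb]; ring, by rw [← h', ha, hb]; ring⟩
  rw [← IsCoprime.pow_iff two_pos two_pos, sq, sq, ← ha, ← hb]
  exact hco

/-- `(v - u) / 2` and `(v + u) / 2` are coprime with product `kw²`, so they are `ka²` and `b²`
in some order. -/
lemma Int.exists_of_sq_sub_sq_eq_four_mul_sq {k : ℕ} (hk : k.Prime) {u v w : ℤ}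
    (huv : IsCoprime u v) (hv : 0 < v) (hw : w ≠ 0) (h : v ^ 2 - u ^ 2 = 4 * k * w ^ 2) :
    ∃ a b, IsCoprime a b ∧ v = k * a ^ 2 + b ^ 2 ∧ u ^ 2 = (b ^ 2 - k * a ^ 2) ^ 2 ∧
      w ^ 2 = a ^ 2 * b ^ 2 := by
  obtain ⟨m, hm⟩ : Even (v - u) := by
    have : Even (v ^ 2 - u ^ 2) := ⟨2 * k * w ^ 2, by linear_combination h⟩
    simpa [Int.even_sub, Int.even_pow] using this
  have hmn : m * (m + u) = k * w ^ 2 :=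
    mul_left_cancel₀ four_ne_zero (by linear_combination h - (v + u + m + m) * hm)
  have hk0 : (0 : ℤ) < k := by exact_mod_cast hk.pos
  have hmn_pos : 0 < m * (m + u) := by rw [hmn]; positivity
  have hm0 : 0 < m := by nlinarith
  have hn0 : 0 < m + u := pos_of_mul_pos_right hmn_pos hm0.le
  have hco : IsCoprime m (m + u) := by
    obtain ⟨e, f, hef⟩ := huv
    exact ⟨f - e, e + f, by linear_combination hef - f * hm⟩
  rcases (Nat.prime_iff_prime_int.mp hk).dvd_or_dvd ⟨_, hmn⟩ with hkm | hkn
  · obtain ⟨a, b, hab, ha, hb, hw⟩ :=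
      Int.exists_eq_mul_sq_of_mul_eq_mul_sq hk0 hco hm0 hn0 hmn hkm
    exact ⟨a, b, hab, by linear_combination hm + ha + hb,
      by linear_combination (u + b ^ 2 - k * a ^ 2) * (hb - ha), hw⟩
  · obtain ⟨a, b, hab, ha, hb, hw⟩ :=
      Int.exists_eq_mul_sq_of_mul_eq_mul_sq hk0 hco.symm hn0 hm0 (by rw [mul_comm, hmn]) hkn
    exact ⟨a, b, hab, by linear_combination hm + ha + hb,
      by linear_combination (u - b ^ 2 + k * a ^ 2) * (ha - hb), hw⟩

structure IsLegPair (s t : ℤ) : Prop where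
  left_ne_zero : s ≠ 0
  right_ne_zero : t ≠ 0
  isCoprime : IsCoprime s t
  isSquare_sq_add_sq : IsSquare (s ^ 2 + t ^ 2)
  isSquare_four_mul_sq_add_sq : IsSquare (4 * s ^ 2 + t ^ 2)

theorem exists_isLegPair_of_isSquare_sq_sub_nine_mul_sq {n d : ℤ} (hnd : IsCoprime n d)
    (hn : n ≠ 0) (h₁ : IsSquare (d ^ 2 - n ^ 2)) (h₉ : IsSquare (d ^ 2 - 9 * n ^ 2)) :
    ∃ s t, IsLegPair s t ∧ s ^ 2 + t ^ 2 ≤ d ^ 2 := by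
  have hn_even : Even n := by
    -- for odd `n`, `d` is odd too, so the squares `d² - n²` and `d² - 9n²` are divisible by `8`,
    -- hence by `16`, yet they differ by `8n²`
    obtain ⟨X, hX⟩ := (isSquare_iff_exists_sq _).mp h₁
    obtain ⟨Y, hY⟩ := (isSquare_iff_exists_sq _).mp h₉
    by_contra hn_odd
    have : n ^ 2 % 2 = 1 := Int.odd_iff.mp (Int.not_even_iff_odd.mp hn_odd).pow
    rcases Int.sq_emod_sixteen X with _ | _ | _ | _ <;>
      rcases Int.sq_emod_sixteen Y with _ | _ | _ | _ <;>
      rcases Int.sq_emod_sixteen d with _ | _ | _ | _ <;>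
      rcases Int.sq_emod_sixteen n with _ | _ | _ | _ <;> omega
  have hd_odd : Odd d := Int.odd_of_isCoprime_of_even hnd hn_even
  have h₁_odd : Odd (d ^ 2 - n ^ 2) :=
    hd_odd.pow.sub_even (Int.even_pow.mpr ⟨hn_even, two_ne_zero⟩)
  obtain ⟨X, hX_pos, hX⟩ :=
    Int.exists_pos_eq_sq_of_isSquare h₁ (fun h => by simp [h] at h₁_odd)
  have hX_odd : Odd X := (Int.odd_pow' two_ne_zero).mp (hX ▸ h₁_odd)
  obtain ⟨Y, hY⟩ := (isSquare_iff_exists_sq _).mp h₉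
  have hXY : IsCoprime X Y :=
    Int.isCoprime_of_dvd_prime_pow_mul_sq (n := 3) Int.prime_two
      (Int.two_dvd_ne_zero.mpr (Int.odd_iff.mp hX_odd)) hnd
      (fun e h h' => (h.linear_comb h' X (-Y)).trans
        (dvd_of_eq (by linear_combination hY - hX)))
      (fun e h h' => (h.linear_comb h' (9 * X) (-Y)).trans
        (dvd_of_eq (by linear_combination hY - 9 * hX)))
  obtain ⟨a, b, hab, hXab, -, hnab⟩ := Int.exists_of_sq_sub_sq_eq_four_mul_sq Nat.prime_two
    hXY.symm hX_pos hn (by push_cast; linear_combination hY - hX)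
  have ha : a ≠ 0 := by rintro rfl; simp [hn] at hnab
  have hb : b ≠ 0 := by rintro rfl; simp [hn] at hnab
  have hd : (a ^ 2 + b ^ 2) * (4 * a ^ 2 + b ^ 2) = d ^ 2 := by
    linear_combination -(X + 2 * a ^ 2 + b ^ 2) * hXab - hnab - hX
  have h3 : ¬3 ∣ a ^ 2 + b ^ 2 := fun h3 =>
    have ⟨h3a, h3b⟩ := Int.three_dvd_of_three_dvd_sq_add_sq h3
    Int.prime_three.not_isUnit (hab.isUnit_of_dvd' h3a h3b)
  have hco : IsCoprime (a ^ 2 + b ^ 2) (4 * a ^ 2 + b ^ 2) :=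
    Int.isCoprime_of_dvd_prime_pow_mul_sq (n := 1) Int.prime_three h3 hab
      (fun e h h' => (h.linear_comb h' (-1) 1).trans (dvd_of_eq (by ring)))
      (fun e h h' => (h.linear_comb h' 4 (-1)).trans (dvd_of_eq (by ring)))
  refine ⟨a, b, ⟨ha, hb, hab, Int.isSquare_of_isCoprime_of_mul_eq_sq hco hd (by positivity),
    Int.isSquare_of_isCoprime_of_mul_eq_sq hco.symm (by rw [mul_comm, hd]) (by positivity)⟩, ?_⟩
  have := sq_pos_of_ne_zero hb
  rw [← hd]
  exact le_mul_of_one_le_right (by positivity) (by nlinarith [sq_nonneg a])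

theorem exists_isLegPair_of_sq_eq_mul_sub_sq {a b n : ℤ} (hab : IsCoprime a b) (hn : n ≠ 0)
    (hn2 : n ^ 2 = (b ^ 2 - a ^ 2) * (4 * a ^ 2 - b ^ 2)) :
    ∃ s t, IsLegPair s t ∧ s ^ 2 + t ^ 2 = a ^ 2 := by
  obtain ⟨hpos₁, hpos₂⟩ : 0 < b ^ 2 - a ^ 2 ∧ 0 < 4 * a ^ 2 - b ^ 2 := by
    rcases pos_and_pos_or_neg_and_neg_of_mul_pos (hn2 ▸ sq_pos_of_ne_zero hn) with h | h
    · exact h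
    · nlinarith [sq_nonneg a]
  -- the two factors add up to `3a²`, and their gcd divides `3`
  by_cases h3 : (3 : ℤ) ∣ b ^ 2 - a ^ 2
  · obtain ⟨D, hD⟩ := h3
    have hn2' : n ^ 2 = 3 * (3 * (D * (a ^ 2 - D))) := by
      linear_combination hn2 + (4 * a ^ 2 - b ^ 2 - 3 * D) * hD
    obtain ⟨m, rfl⟩ : (3 : ℤ) ∣ n := Int.prime_three.dvd_of_dvd_pow ⟨_, hn2'⟩
    have hDm : D * (a ^ 2 - D) = m ^ 2 :=
      mul_left_cancel₀ (by norm_num : (9 : ℤ) ≠ 0) (by linear_combination -hn2')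
    have hco : IsCoprime D (a ^ 2 - D) := by
      obtain ⟨e, f, hef⟩ := (IsCoprime.pow_iff two_pos two_pos).mpr hab
      exact ⟨e + 4 * f, e + f, by linear_combination hef - f * hD⟩
    obtain ⟨A, hA⟩ := Int.isSquare_of_isCoprime_of_mul_eq_sq hco hDm (by linarith)
    obtain ⟨B, hB⟩ :=
      Int.isSquare_of_isCoprime_of_mul_eq_sq hco.symm (by rw [mul_comm, hDm]) (by linarith)
    rw [hB, hA] at hco
    refine ⟨A, B, ⟨?_, ?_, hco.of_mul_left_left.of_mul_right_left,
      ⟨a, by linear_combination -hA - hB⟩, ⟨b, by linear_combination -4 * hA - hB - hD⟩⟩,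
      by linear_combination -hA - hB⟩
    · rintro rfl
      linarith
    · rintro rfl
      linarith
  · have hco : IsCoprime (b ^ 2 - a ^ 2) (4 * a ^ 2 - b ^ 2) :=
      Int.isCoprime_of_dvd_prime_pow_mul_sq (n := 1) Int.prime_three h3 hab
        (fun e h h' => (h.linear_comb h' 1 1).trans (dvd_of_eq (by ring)))
        (fun e h h' => (h.linear_comb h' 4 1).trans (dvd_of_eq (by ring)))
    obtain ⟨A, hA⟩ := Int.isSquare_of_isCoprime_of_mul_eq_sq hco hn2.symm hpos₁.le
    obtain ⟨B, hB⟩ :=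
      Int.isSquare_of_isCoprime_of_mul_eq_sq hco.symm (by rw [mul_comm, ← hn2]) hpos₂.le
    have h3A := (Int.three_dvd_of_three_dvd_sq_add_sq (a := A) (b := B)
      ⟨a ^ 2, by linear_combination -hA - hB⟩).1
    exact absurd (hA ▸ dvd_mul_of_dvd_left h3A A) h3

theorem exists_isLegPair_of_isSquare_nine_mul_sq_sub_sq {n d : ℤ} (hnd : IsCoprime n d)
    (hn : n ≠ 0) (h₁ : IsSquare (d ^ 2 - n ^ 2)) (h₉ : IsSquare (9 * d ^ 2 - n ^ 2)) :
    ∃ s t, IsLegPair s t ∧ s ^ 2 + t ^ 2 ≤ d ^ 2 := by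
  have hn_even : Even n := by
    -- for odd `n`, `d` is odd too, so the squares `d² - n²` and `9d² - n²` are divisible by `8`,
    -- hence by `16`, yet they differ by `8d²`
    obtain ⟨P, hP⟩ := (isSquare_iff_exists_sq _).mp h₁
    obtain ⟨Q, hQ⟩ := (isSquare_iff_exists_sq _).mp h₉
    by_contra hn_odd
    have : n ^ 2 % 2 = 1 := Int.odd_iff.mp (Int.not_even_iff_odd.mp hn_odd).pow
    rcases Int.sq_emod_sixteen P with _ | _ | _ | _ <;>
      rcases Int.sq_emod_sixteen Q with _ | _ | _ | _ <;>
      rcases Int.sq_emod_sixteen d with _ | _ | _ | _ <;>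
      rcases Int.sq_emod_sixteen n with _ | _ | _ | _ <;> omega
  have hd_odd : Odd d := Int.odd_of_isCoprime_of_even hnd hn_even
  have hn2_even : Even (n ^ 2) := Int.even_pow.mpr ⟨hn_even, two_ne_zero⟩
  obtain ⟨P, hP⟩ := (isSquare_iff_exists_sq _).mp h₁
  have hP_odd : Odd P := (Int.odd_pow' two_ne_zero).mp (hP ▸ hd_odd.pow.sub_even hn2_even)
  have h₉_odd : Odd (9 * d ^ 2 - n ^ 2) :=
    ((by decide : Odd (9 : ℤ)).mul hd_odd.pow).sub_even hn2_even
  obtain ⟨Q, hQ_pos, hQ⟩ :=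
    Int.exists_pos_eq_sq_of_isSquare h₉ (fun h => by simp [h] at h₉_odd)
  have hPQ : IsCoprime P Q :=
    Int.isCoprime_of_dvd_prime_pow_mul_sq (n := 3) Int.prime_two
      (Int.two_dvd_ne_zero.mpr (Int.odd_iff.mp hP_odd)) hnd.symm
      (fun e h h' => (h.linear_comb h' (-P) Q).trans
        (dvd_of_eq (by linear_combination hP - hQ)))
      (fun e h h' => (h.linear_comb h' (-9 * P) Q).trans
        (dvd_of_eq (by linear_combination 9 * hP - hQ)))
  obtain ⟨a, b, hab, -, hPab, hdab⟩ := Int.exists_of_sq_sub_sq_eq_four_mul_sq (w := d)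
    Nat.prime_two hPQ hQ_pos (by rintro rfl; simp at hd_odd)
    (by push_cast; linear_combination hP - hQ)
  have hb : b ≠ 0 := by
    rintro rfl
    obtain rfl : d = 0 := by simpa using hdab
    simp at hd_odd
  obtain ⟨s, t, h, hst⟩ := exists_isLegPair_of_sq_eq_mul_sub_sq hab hn
    (by linear_combination -hP - hPab + hdab)
  refine ⟨s, t, h, ?_⟩
  have := sq_pos_of_ne_zero hb
  rw [hst, hdab]
  exact le_mul_of_one_le_right (sq_nonneg a) (by omega)

theorem exists_isLegPair_of_sq_eq_mul_sub_nine_mul_sq {α β t : ℤ} (hαβ : IsCoprime α β)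
    (hα : α ≠ 0) (hβ : β ≠ 0) (hF_odd : Odd (β ^ 2 - α ^ 2)) (ht : t ≠ 0)
    (ht2 : t ^ 2 = (β ^ 2 - α ^ 2) * (β ^ 2 - 9 * α ^ 2)) :
    ∃ s t', IsLegPair s t' ∧ s ^ 2 + t' ^ 2 < (β ^ 2 - 3 * α ^ 2) ^ 2 := by
  have hco : IsCoprime (β ^ 2 - α ^ 2) (β ^ 2 - 9 * α ^ 2) :=
    Int.isCoprime_of_dvd_prime_pow_mul_sq (n := 3) Int.prime_two
      (Int.two_dvd_ne_zero.mpr (Int.odd_iff.mp hF_odd)) hαβ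
      (fun e h h' => (h.linear_comb h' 1 (-1)).trans (dvd_of_eq (by ring)))
      (fun e h h' => (h.linear_comb h' 9 (-1)).trans (dvd_of_eq (by ring)))
  have := sq_pos_of_ne_zero hα
  rcases pos_and_pos_or_neg_and_neg_of_mul_pos (ht2 ▸ sq_pos_of_ne_zero ht) with
    ⟨h₁, h₉⟩ | ⟨h₁, h₉⟩
  · obtain ⟨s, t', h, hle⟩ := exists_isLegPair_of_isSquare_sq_sub_nine_mul_sq hαβ hα
      (Int.isSquare_of_isCoprime_of_mul_eq_sq hco ht2.symm h₁.le)
      (Int.isSquare_of_isCoprime_of_mul_eq_sq hco.symm (by rw [mul_comm, ← ht2]) h₉.le)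
    exact ⟨s, t', h, hle.trans_lt (by nlinarith)⟩
  · have hco' : IsCoprime (α ^ 2 - β ^ 2) (9 * α ^ 2 - β ^ 2) := by
      simpa only [neg_sub] using hco.neg_neg
    obtain ⟨s, t', h, hle⟩ := exists_isLegPair_of_isSquare_nine_mul_sq_sub_sq hαβ.symm hβ
      (Int.isSquare_of_isCoprime_of_mul_eq_sq (c := t) hco'
        (by linear_combination ht2.symm) (by linarith))
      (Int.isSquare_of_isCoprime_of_mul_eq_sq (c := t) hco'.symm
        (by linear_combination ht2.symm) (by linarith))
    exact ⟨s, t', h, hle.trans_lt (by nlinarith)⟩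

theorem IsLegPair.exists_lt_of_even {s t : ℤ} (h : IsLegPair s t) (hs : Even s) :
    ∃ s' t', IsLegPair s' t' ∧ s' ^ 2 + t' ^ 2 < s ^ 2 + t ^ 2 := by
  have ht_odd : Odd t := Int.odd_of_isCoprime_of_even h.isCoprime hs
  obtain ⟨σ, rfl⟩ := hs.two_dvd
  have hσ : σ ≠ 0 := right_ne_zero_of_mul h.left_ne_zero
  obtain ⟨U, hU⟩ := (isSquare_iff_exists_sq _).mp h.isSquare_sq_add_sq
  have hV_odd : Odd (4 * (2 * σ) ^ 2 + t ^ 2) :=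
    ((by decide : Even (4 : ℤ)).mul_right _).add_odd ht_odd.pow
  obtain ⟨V, hV_pos, hV⟩ := Int.exists_pos_eq_sq_of_isSquare h.isSquare_four_mul_sq_add_sq
    (fun h => by simp [h] at hV_odd)
  replace hV_odd : Odd V := (Int.odd_pow' two_ne_zero).mp (hV ▸ hV_odd)
  have h3U : ¬3 ∣ U := fun h3 =>
    have ⟨h3s, h3t⟩ := Int.three_dvd_of_three_dvd_sq_add_sq (hU ▸ dvd_pow h3 two_ne_zero)
    Int.prime_three.not_isUnit (h.isCoprime.isUnit_of_dvd' h3s h3t)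
  have hUV : IsCoprime U V :=
    Int.isCoprime_of_dvd_prime_pow_mul_sq (n := 1) Int.prime_three h3U h.isCoprime
      (fun e h h' => (h.linear_comb h' (-U) V).trans
        (dvd_of_eq (by linear_combination hU - hV)))
      (fun e h h' => (h.linear_comb h' (4 * U) (-V)).trans
        (dvd_of_eq (by linear_combination hV - 4 * hU)))
  obtain ⟨α, β, hαβ, hVαβ, hUαβ, hσαβ⟩ := Int.exists_of_sq_sub_sq_eq_four_mul_sq
    Nat.prime_three hUV hV_pos hσ (by push_cast; linear_combination hU - hV)
  push_cast at hVαβ hUαβ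
  have hα : α ≠ 0 := by rintro rfl; simp [hσ] at hσαβ
  have hβ : β ≠ 0 := by rintro rfl; simp [hσ] at hσαβ
  have ht2 : t ^ 2 = (β ^ 2 - α ^ 2) * (β ^ 2 - 9 * α ^ 2) := by
    linear_combination hU + hUαβ - 4 * hσαβ
  have hF_odd : Odd (β ^ 2 - α ^ 2) := by
    rw [show β ^ 2 - α ^ 2 = V - 2 * (2 * α ^ 2) by linear_combination -hVαβ]
    exact hV_odd.sub_even (even_two_mul _)
  obtain ⟨s', t', h', hlt⟩ := exists_isLegPair_of_sq_eq_mul_sub_nine_mul_sq hαβ hα hβ hF_odd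
    h.right_ne_zero ht2
  exact ⟨s', t', h', by rwa [hU, hUαβ]⟩

theorem IsLegPair.swap {s t : ℤ} (h : IsLegPair s (2 * t)) : IsLegPair t s := by
  obtain ⟨V, hV⟩ := (isSquare_iff_exists_sq _).mp h.isSquare_four_mul_sq_add_sq
  obtain ⟨W, rfl⟩ : 2 ∣ V :=
    Int.prime_two.dvd_of_dvd_pow (n := 2) ⟨2 * (s ^ 2 + t ^ 2), by linear_combination -hV⟩
  refine ⟨right_ne_zero_of_mul h.right_ne_zero, h.left_ne_zero,
    h.isCoprime.of_mul_right_right.symm,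
    ⟨W, mul_left_cancel₀ four_ne_zero (by linear_combination hV)⟩, ?_⟩
  simpa only [show 4 * t ^ 2 + s ^ 2 = s ^ 2 + (2 * t) ^ 2 by ring] using h.isSquare_sq_add_sq

theorem IsLegPair.exists_lt {s t : ℤ} (h : IsLegPair s t) :
    ∃ s' t', IsLegPair s' t' ∧ s' ^ 2 + t' ^ 2 < s ^ 2 + t ^ 2 := by
  rcases Int.even_or_odd s with hs | hs
  · exact h.exists_lt_of_even hs
  rcases Int.even_or_odd t with ht | ht
  · obtain ⟨t', rfl⟩ := ht.two_dvd
    have := sq_pos_of_ne_zero (right_ne_zero_of_mul h.right_ne_zero)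
    exact ⟨t', s, h.swap, by nlinarith⟩
  · -- `s² + t² ≡ 2 (mod 4)` is not a square
    obtain ⟨U, hU⟩ := (isSquare_iff_exists_sq _).mp h.isSquare_sq_add_sq
    have := Int.odd_iff.mp (hs.pow : Odd (s ^ 2))
    have := Int.odd_iff.mp (ht.pow : Odd (t ^ 2))
    rcases Int.sq_emod_sixteen s with _ | _ | _ | _ <;>
      rcases Int.sq_emod_sixteen t with _ | _ | _ | _ <;>
      rcases Int.sq_emod_sixteen U with _ | _ | _ | _ <;> omega

theorem not_isLegPair (s t : ℤ) : ¬IsLegPair s t := by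
  induction hN : (s ^ 2 + t ^ 2).toNat using Nat.strong_induction_on generalizing s t with
  | _ N ih =>
  intro h
  obtain ⟨s', t', h', hlt⟩ := h.exists_lt
  have := add_nonneg (sq_nonneg s') (sq_nonneg t')
  exact ih _ (by omega) s' t' rfl h'

theorem Rat.exists_isLegPair {r : ℚ} (hr : r ≠ 0) (h₁ : IsSquare (1 - r ^ 2))
    (h₉ : IsSquare (1 - 9 * r ^ 2)) : ∃ s t, IsLegPair s t := by
  have hnd : IsCoprime r.num r.den := Int.isCoprime_iff_gcd_eq_one.mpr r.reduced
  have isSquare_clear_den (c : ℤ) (hc : IsSquare (1 - c * r ^ 2)) :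
      IsSquare ((r.den : ℤ) ^ 2 - c * r.num ^ 2) := by
    rw [← Rat.isSquare_intCast_iff]
    have : (((r.den : ℤ) ^ 2 - c * r.num ^ 2 : ℤ) : ℚ) =
        (r.den : ℚ) ^ 2 * (1 - c * r ^ 2) := by
      push_cast
      rw [← Rat.mul_den_eq_num]
      ring
    rw [this]
    exact (IsSquare.sq _).mul hc
  obtain ⟨s, t, h, -⟩ := exists_isLegPair_of_isSquare_sq_sub_nine_mul_sq hnd
    (Rat.num_ne_zero.mpr hr) (by simpa using isSquare_clear_den 1 (by simpa using h₁))
    (isSquare_clear_den 9 (by simpa using h₉))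
  exact ⟨s, t, h⟩

theorem no_four_squares_in_nontrivial_AP :
    ¬ ∃ (a b c d e : ℚ), e ≠ 0 ∧ b^2 - a^2 = e ∧ c^2 - b^2 = e ∧ d^2 - c^2 = e := by
  rintro ⟨a, b, c, d, e, he, hab, hbc, hcd⟩
  have hZ : b ^ 2 + c ^ 2 ≠ 0 := by
    intro hZ
    apply he
    nlinarith [sq_nonneg b, sq_nonneg c]
  obtain ⟨s, t, h⟩ := Rat.exists_isLegPair (r := e / (b ^ 2 + c ^ 2)) (div_ne_zero he hZ)
    ⟨2 * b * c / (b ^ 2 + c ^ 2), by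
      field_simp
      linear_combination (c ^ 2 - b ^ 2 + e) * hbc⟩
    ⟨2 * a * d / (b ^ 2 + c ^ 2), by
      field_simp
      linear_combination
        (c ^ 2 - b ^ 2 + 5 * e) * hbc - 4 * (b ^ 2 - e) * hcd + 4 * d ^ 2 * hab⟩
  exact not_isLegPair s t h
end

section
/- On the genus-two curve C: y^2 = 12x^5 - 322x^4 + 3208x^3 - 14438x^2 + 27980x - 16079, the twelve points (1,19), (2,55), (3,37), (4,1), (5,11), (6,31), (7,35), (8,23), (9,29), (10,89), (11,181), (12,305) all lie on C; in particular their x-coordinates 1,2,...,12 form an arithmetic progression of length 12. -/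
def ulasF (x : ℚ) : ℚ := 12*x^5 - 322*x^4 + 3208*x^3 - 14438*x^2 + 27980*x - 16079

def ulasPts : List (ℚ × ℚ) :=
  [(1, 19), (2, 55), (3, 37), (4, 1), (5, 11), (6, 31), (7, 35),
   (8, 23), (9, 29), (10, 89), (11, 181), (12, 305)]

theorem ulasPts_mem_curve : ∀ P ∈ ulasPts, P.2 ^ 2 = ulasF P.1 := by
  simp only [ulasPts, List.forall_mem_cons]
  norm_num [ulasF]

theorem ulasPts_getElem!_fst (k : ℕ) (hk : k < 12) : (ulasPts[k]!).1 = 1 + k := by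
  interval_cases k <;> norm_num [ulasPts]

theorem twelve_points_in_AP_on_genus_two_curve :
    (∀ P ∈ ulasPts, P.2 ^ 2 = ulasF P.1) ∧
    ulasPts.length = 12 ∧
    (∀ k : ℕ, k < 12 → (ulasPts[k]!).1 = 1 + k) :=
  ⟨ulasPts_mem_curve, rfl, ulasPts_getElem!_fst⟩
end

section
/- Let f(u,x) = a5*x^5 + a4*x^4 + a3*x^3 + a2*x^2 + a1*x + a0 where a0 = 5695244944u^2 - 12894461800u + 263250625, a1 = -8(533634200u^2 - 873304794u - 1611807725), a2 = 32(37257330u^2 - 8034400u - 396302603), a3 = -3520(41536u^2 + 145226u - 1285845), a4 = 3520(1888u^2 + 31152u - 193477), a5 = -(6645760u - 36551680). Then for every rational u there exists a polynomial h(u,x) in Q[x] of degree 6 in x such that (x-u)^2 * prod_{i=1}^{10}(x-i) = h(u,x)^2 - (25/1048576) f(u,x); in particular f(u,i) is a square of a rational for every i in {1,...,10}. -/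
open Polynomial

def a0 (u : ℚ) : ℚ := 5695244944*u^2 - 12894461800*u + 263250625
def a1 (u : ℚ) : ℚ := -8*(533634200*u^2 - 873304794*u - 1611807725)
def a2 (u : ℚ) : ℚ := 32*(37257330*u^2 - 8034400*u - 396302603)
def a3 (u : ℚ) : ℚ := -3520*(41536*u^2 + 145226*u - 1285845)
def a4 (u : ℚ) : ℚ := 3520*(1888*u^2 + 31152*u - 193477)
def a5 (u : ℚ) : ℚ := -(6645760*u - 36551680)

noncomputable def fPoly (u : ℚ) : Polynomial ℚ :=
  C (a5 u) * X^5 + C (a4 u) * X^4 + C (a3 u) * X^3 + C (a2 u) * X^2 + C (a1 u) * X + C (a0 u)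

noncomputable def Hu (u : ℚ) : Polynomial ℚ :=
  1024 * X^6 + (-28160 - 1024 * C u) * X^5 + (288640 + 28160 * C u) * X^4 +
    (-1355200 - 288640 * C u) * X^3 + (2831576 + 1355200 * C u) * X^2 +
    (-1986820 - 2831576 * C u) * X + (-81125 + 1986820 * C u)

lemma prod_Icc10 :
    (∏ i ∈ Finset.Icc (1:ℕ) 10, (X - C (i : ℚ))) =
      (X - 1) * (X - 2) * (X - 3) * (X - 4) * (X - 5) * (X - 6) * (X - 7) * (X - 8) *
        (X - 9) * (X - 10) := by
  rw [show Finset.Icc (1:ℕ) 10 = {1,2,3,4,5,6,7,8,9,10} from rfl]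
  norm_num [Finset.prod_insert, Finset.mem_insert]
  ring

lemma key (u : ℚ) :
    C (1048576 : ℚ) * ((X - C u)^2 * ∏ i ∈ Finset.Icc (1:ℕ) 10, (X - C (i : ℚ))) =
      (Hu u)^2 - C (25 : ℚ) * fPoly u := by
  rw [prod_Icc10]
  simp only [fPoly, Hu, a0, a1, a2, a3, a4, a5, map_add, map_sub, map_mul, map_neg, map_pow,
    map_ofNat]
  ring

theorem decomposition_and_square_values (u : ℚ) :
    (∃ h : Polynomial ℚ, h.degree = 6 ∧
      (X - C u)^2 * ∏ i ∈ Finset.Icc (1:ℕ) 10, (X - C (i : ℚ)) =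
        h^2 - C (25/1048576) * fPoly u) ∧
    (∀ i ∈ Finset.Icc (1:ℕ) 10, ∃ y : ℚ, (fPoly u).eval (i : ℚ) = y^2) := by
  have hC : (C (1048576 : ℚ)) ≠ 0 := by
    simp
  have hmain : (X - C u)^2 * ∏ i ∈ Finset.Icc (1:ℕ) 10, (X - C (i : ℚ)) =
      (C (1/1024 : ℚ) * Hu u)^2 - C (25/1048576) * fPoly u := by
    apply mul_left_cancel₀ hC
    rw [key u, mul_sub, mul_pow, ← C_pow, ← mul_assoc, ← mul_assoc, ← C_mul, ← C_mul]
    norm_num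
  constructor
  · refine ⟨C (1/1024 : ℚ) * Hu u, ?_, hmain⟩
    rw [Hu]
    compute_degree!
  · intro i hi
    refine ⟨(1/5) * (Hu u).eval (i : ℚ), ?_⟩
    have he := congrArg (Polynomial.eval (i : ℚ)) hmain
    have hz : ((∏ j ∈ Finset.Icc (1:ℕ) 10, (X - C (j : ℚ)))).eval (i : ℚ) = 0 := by
      rw [Polynomial.eval_prod]
      exact Finset.prod_eq_zero hi (by simp)
    simp only [Polynomial.eval_mul, Polynomial.eval_pow, Polynomial.eval_sub, hz, mul_zero,
      Polynomial.eval_C] at he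
    have : (fPoly u).eval (i : ℚ) =
        (1048576/25) * ((1/1024 : ℚ) * (Hu u).eval (i : ℚ))^2 := by
      linear_combination (1048576/25 : ℚ) * he
    rw [this]; ring
end

section
/- With f(u,x) as given by the explicit coefficients a0,...,a5 (quadratic in u), for every rational t with 5695244944 t^2 - 1 ≠ 0, setting u1(t) = 11(4523021144t^2 + 2950t - 1)/(5695244944t^2 - 1) and p1(t) = 16225(5695244944t^2 - 794728t + 1)/(5695244944t^2 - 1), one has p1(t)^2 = f(u1(t), 11). -/
def f (u x : ℚ) : ℚ :=
  a5 u * x^5 + a4 u * x^4 + a3 u * x^3 + a2 u * x^2 + a1 u * x + a0 u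

theorem param_at_eleven (t : ℚ) (ht : 5695244944*t^2 - 1 ≠ 0) :
    (16225*(5695244944*t^2 - 794728*t + 1)/(5695244944*t^2 - 1))^2 =
      f (11*(4523021144*t^2 + 2950*t - 1)/(5695244944*t^2 - 1)) 11 := by
  simp only [f, a0, a1, a2, a3, a4, a5]
  field_simp
  ring
end

section
/- With f(u,x) as given by the explicit coefficients a0,...,a5 (quadratic in u), for every rational t with 5695244944 t^2 - 1 ≠ 0, setting u2(t) = 32450 t (397364 t + 1)/(5695244944 t^2 - 1) and p2(t) = 16225(5695244944 t^2 + 794728 t + 1)/(5695244944 t^2 - 1), one has p2(t)^2 = f(u2(t), 0). -/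
theorem param_at_zero (t : ℚ) (ht : 5695244944*t^2 - 1 ≠ 0) :
    (16225*(5695244944*t^2 + 794728*t + 1)/(5695244944*t^2 - 1))^2 =
      f (32450*t*(397364*t + 1)/(5695244944*t^2 - 1)) 0 := by
  simp only [f, a0, a1, a2, a3, a4, a5]
  field_simp
  ring
end

section
/- There exist infinitely many rational u such that the polynomial f(u, x) (with the explicit coefficients a0,...,a5 quadratic in u) has square rational values at all eleven points x = 1, 2, ..., 11. -/
noncomputable def gpar (t : ℚ) : ℚ := 11 + (12894461800 - 32450*t)/(t^2 - 5695244944)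

lemma gpar_den (t : ℚ) (ht : (75467:ℚ) ≤ t) : t^2 - 5695244944 ≠ 0 := by
  nlinarith

lemma gpar_mem (t : ℚ) (ht : (75467:ℚ) ≤ t) :
    gpar t ∈ {u : ℚ | ∀ i ∈ Finset.Icc (1:ℕ) 11, ∃ y : ℚ, f u (i : ℚ) = y^2} := by
  have hden := gpar_den t ht
  intro i hi
  set u := gpar t with hu
  simp only [Finset.mem_Icc] at hi
  obtain ⟨hi1, hi2⟩ := hi
  interval_cases i
  · exact ⟨49788*u - 66013, by simp only [f, a0, a1, a2, a3, a4, a5]; push_cast; ring⟩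
  · exact ⟨29372*u - 42519, by simp only [f, a0, a1, a2, a3, a4, a5]; push_cast; ring⟩
  · exact ⟨14452*u - 27131, by simp only [f, a0, a1, a2, a3, a4, a5]; push_cast; ring⟩
  · exact ⟨6228*u - 41137, by simp only [f, a0, a1, a2, a3, a4, a5]; push_cast; ring⟩
  · exact ⟨5788*u - 45165, by simp only [f, a0, a1, a2, a3, a4, a5]; push_cast; ring⟩
  · exact ⟨5788*u - 18503, by simp only [f, a0, a1, a2, a3, a4, a5]; push_cast; ring⟩
  · exact ⟨6228*u - 27371, by simp only [f, a0, a1, a2, a3, a4, a5]; push_cast; ring⟩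
  · exact ⟨14452*u - 131841, by simp only [f, a0, a1, a2, a3, a4, a5]; push_cast; ring⟩
  · exact ⟨29372*u - 280573, by simp only [f, a0, a1, a2, a3, a4, a5]; push_cast; ring⟩
  · exact ⟨49788*u - 481655, by simp only [f, a0, a1, a2, a3, a4, a5]; push_cast; ring⟩
  · refine ⟨16225 + t*(u - 11), ?_⟩
    simp only [f, a0, a1, a2, a3, a4, a5, hu, gpar]
    push_cast
    field_simp
    ring

lemma gpar_fiber (c : ℚ) : {t : ℚ | (75467:ℚ) ≤ t ∧ gpar t = c}.Finite := by
  have hp : (Polynomial.C (c - 11) * Polynomial.X^2 + Polynomial.C (32450:ℚ) * Polynomial.X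
      - Polynomial.C ((c-11)*5695244944 + 12894461800) : Polynomial ℚ) ≠ 0 := by
    intro h
    have e1 := congrArg (Polynomial.eval (1:ℚ)) h
    have e2 := congrArg (Polynomial.eval (-1:ℚ)) h
    simp at e1 e2
    linarith
  refine (Polynomial.finite_setOf_isRoot hp).subset ?_
  rintro t ⟨ht, hgt⟩
  have hden := gpar_den t ht
  have key : (c - 11) * (t^2 - 5695244944) = 12894461800 - 32450*t := by
    have : (12894461800 - 32450*t)/(t^2 - 5695244944) = c - 11 := by
      rw [← hgt, gpar]; ring
    field_simp at this
    linarith [this]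
  simp only [Set.mem_setOf_eq, Polynomial.IsRoot, Polynomial.eval_sub, Polynomial.eval_add,
    Polynomial.eval_mul, Polynomial.eval_pow, Polynomial.eval_C, Polynomial.eval_X]
  linarith [key]

theorem infinitely_many_eleven_square_values :
    {u : ℚ | ∀ i ∈ Finset.Icc (1:ℕ) 11, ∃ y : ℚ, f u (i : ℚ) = y^2}.Infinite := by
  set S := {u : ℚ | ∀ i ∈ Finset.Icc (1:ℕ) 11, ∃ y : ℚ, f u (i : ℚ) = y^2} with hS
  have himg : (gpar '' Set.Ici (75467:ℚ)).Infinite := by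
    intro hfin
    have hcov : Set.Ici (75467:ℚ) ⊆
        ⋃ c ∈ gpar '' Set.Ici (75467:ℚ), {t : ℚ | (75467:ℚ) ≤ t ∧ gpar t = c} := by
      intro t ht
      exact Set.mem_biUnion ⟨t, ht, rfl⟩ ⟨ht, rfl⟩
    have : (Set.Ici (75467:ℚ)).Finite :=
      (hfin.biUnion (fun c _ => gpar_fiber c)).subset hcov
    exact Set.Ici_infinite _ this
  refine himg.mono ?_
  rintro u ⟨t, ht, rfl⟩
  exact gpar_mem t ht
end

section
/- For every rational t, there exists a unique pair of polynomials g, H in Q(t)[x] with g of degree 8 in x (monic) and H of degree at most 6 in x such that (x^2 - 15x + 4t) * prod_{i=1}^{14}(x - i) = g(t,x)^2 - H(t,x); moreover H has degree exactly 6 in x for all but finitely many t. -/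
/-!
Both factors of the left side are invariant under `x ↦ 15 - x`, so with `u = x² - 15x` it equals
`(u + 4t) ∏_{k=1}^{7} (u + k(15 - k))`, a monic polynomial of degree 8 in `u`. Its polynomial
square root `g₀ = squarePart t` (degree 4 in `u`) leaves a remainder `H₀ = remainderPart t` of
degree 3 in `u`, i.e. 6 in `x`. Any other decomposition `g² - H` gives `(g - g₀)(g + g₀) = H - H₀`,
impossible for `g ≠ g₀` since the left side then has degree at least 8. The `u³`-coefficient of
`H₀` is a nonzero quintic in `t`.
-/

open Polynomial Finset

theorem Polynomial.Monic.eq_of_sq_sub_eq_sq_sub {R : Type*} [CommRing R] [IsDomain R]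
    [NeZero (2 : R)] {n : ℕ} {g₁ g₂ H₁ H₂ : R[X]} (hg₁ : g₁.Monic) (hg₂ : g₂.Monic)
    (hn₁ : g₁.degree = n) (hn₂ : g₂.degree = n) (hH₁ : H₁.degree < n)
    (hH₂ : H₂.degree < n) (h : g₁ ^ 2 - H₁ = g₂ ^ 2 - H₂) : g₁ = g₂ ∧ H₁ = H₂ := by
  replace hn₁ := natDegree_eq_of_degree_eq_some hn₁
  replace hn₂ := natDegree_eq_of_degree_eq_some hn₂
  obtain rfl : g₁ = g₂ := by
    by_contra hne
    have hsum : (n : WithBot ℕ) ≤ (g₁ + g₂).degree := by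
      refine le_degree_of_ne_zero ?_
      rw [coeff_add, ← hn₁, hg₁.coeff_natDegree, hn₁, ← hn₂, hg₂.coeff_natDegree,
        one_add_one_eq_two]
      exact two_ne_zero
    have hprod : (g₁ - g₂) * (g₁ + g₂) = H₁ - H₂ := by linear_combination h
    have hlt : (H₁ - H₂).degree < n := (degree_sub_le _ _).trans_lt (max_lt hH₁ hH₂)
    have := degree_le_mul_left (g₁ + g₂) (sub_ne_zero.mpr hne)
    rw [mul_comm, hprod] at this
    exact (hsum.trans this).not_gt hlt
  exact ⟨rfl, by linear_combination -h⟩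

theorem Polynomial.prod_range_X_sub_C_eq_comp {R : Type*} [CommRing R] (m : ℕ) :
    ∏ i ∈ range (2 * m), (X - C ((i : R) + 1)) =
      (∏ i ∈ range m, (X + C (((i : R) + 1) * (2 * m - i)))).comp
        (X ^ 2 - C (2 * m + 1 : R) * X) := by
  rw [two_mul, prod_range_add, ← prod_range_reflect (fun i => X - C (((m + i : ℕ) : R) + 1)),
    prod_comp, ← prod_mul_distrib]
  refine prod_congr rfl fun j hj => ?_
  have hj : j < m := mem_range.mp hj
  have hcast : ((m + (m - 1 - j) : ℕ) : R) + 1 = 2 * m - j := by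
    rw [show m + (m - 1 - j) = 2 * m - j - 1 by omega, Nat.cast_sub (by omega),
      Nat.cast_sub (by omega)]
    push_cast; ring
  rw [add_comp, X_comp, C_comp, hcast]
  simp only [map_mul, map_sub, map_add, map_one, map_natCast, map_ofNat]
  ring

theorem prod_Icc_one_fourteen_X_sub_C :
    ∏ i ∈ Icc (1 : ℕ) 14, (X - C (i : ℚ) : ℚ[X]) =
      ((X + C 14 : ℚ[X]) * (X + C 26) * (X + C 36) * (X + C 44) * (X + C 50) * (X + C 54) *
        (X + C 56)).comp (X ^ 2 - C 15 * X) := by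
  have hIcc : ∏ i ∈ Icc (1 : ℕ) 14, (X - C (i : ℚ) : ℚ[X]) =
      ∏ i ∈ range (2 * 7), (X - C ((i : ℚ) + 1)) := by
    rw [← Ico_add_one_right_eq_Icc, prod_Ico_eq_prod_range]
    exact prod_congr rfl fun i _ => by push_cast; ring_nf
  rw [hIcc, prod_range_X_sub_C_eq_comp]
  simp only [prod_range_succ, prod_range_zero]
  norm_num

noncomputable def squarePart (t : ℚ) : ℚ[X] :=
  X ^ 4 + C (2 * t + 140) * X ^ 3 + C (-2 * t ^ 2 + 280 * t + 6636) * X ^ 2 +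
    C (4 * t ^ 3 - 280 * t ^ 2 + 13272 * t + 116080) * X +
    C (-10 * t ^ 4 + 560 * t ^ 3 - 13272 * t ^ 2 + 232160 * t + 430016)

noncomputable def remainderLeadingCoeff : ℚ[X] :=
  -8 * (7 * X ^ 5 - 350 * X ^ 4 + 6636 * X ^ 3 - 58040 * X ^ 2 + 215008 * X - 261120)

noncomputable def remainderPart (t : ℚ) : ℚ[X] :=
  C (remainderLeadingCoeff.eval t) * X ^ 3 +
    C (56 * t ^ 6 - 10080 * t ^ 5 + 418544 * t ^ 4 - 7432320 * t ^ 3 + 63284736 * t ^ 2 -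
      232453120 * t + 284028928) * X ^ 2 +
    C (-80 * t ^ 7 + 10080 * t ^ 6 - 685216 * t ^ 5 + 21832640 * t ^ 4 - 348851840 * t ^ 3 +
      2840418560 * t ^ 2 - 10278228992 * t + 12654223360) * X +
    C (100 * t ^ 8 - 11200 * t ^ 7 + 579040 * t ^ 6 - 19507840 * t ^ 5 + 427564864 * t ^ 4 -
      5680837120 * t ^ 3 + 42483920896 * t ^ 2 - 149048135680 * t + 184913760256)

theorem squarePart_sq_sub_remainderPart (t : ℚ) :
    squarePart t ^ 2 - remainderPart t =
      (X + C (4 * t)) * ((X + C 14) * (X + C 26) * (X + C 36) * (X + C 44) * (X + C 50) *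
        (X + C 54) * (X + C 56)) := by
  simp only [squarePart, remainderPart, remainderLeadingCoeff, eval_mul, eval_sub, eval_add,
    eval_pow, eval_neg, eval_X, eval_ofNat, map_add, map_sub, map_mul, map_pow, map_neg, map_ofNat]
  ring

theorem monic_X_sq_sub_C_mul_X {R : Type*} [CommRing R] [Nontrivial R] (a : R) :
    (X ^ 2 - C a * X).Monic := by
  monicity!

theorem natDegree_X_sq_sub_C_mul_X {R : Type*} [CommRing R] [Nontrivial R] (a : R) :
    (X ^ 2 - C a * X).natDegree = 2 := by
  compute_degree!

theorem monic_squarePart (t : ℚ) : (squarePart t).Monic := by unfold squarePart; monicity!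

theorem natDegree_squarePart (t : ℚ) : (squarePart t).natDegree = 4 := by
  unfold squarePart; compute_degree!

theorem remainderLeadingCoeff_ne_zero : remainderLeadingCoeff ≠ 0 := fun h => by
  simpa [remainderLeadingCoeff] using congrArg (eval 0) h

theorem sq_sub_eq_prod (t : ℚ) :
    ((squarePart t).comp (X ^ 2 - C 15 * X)) ^ 2 - (remainderPart t).comp (X ^ 2 - C 15 * X) =
      (X ^ 2 - C 15 * X + C (4 * t)) * ∏ i ∈ Icc (1 : ℕ) 14, (X - C (i : ℚ)) := by
  rw [← pow_comp, ← sub_comp, squarePart_sq_sub_remainderPart, prod_Icc_one_fourteen_X_sub_C,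
    mul_comp, add_comp, X_comp, C_comp]

theorem monic_squarePart_comp (t : ℚ) : ((squarePart t).comp (X ^ 2 - C 15 * X)).Monic :=
  (monic_squarePart t).comp (monic_X_sq_sub_C_mul_X 15)
    (by rw [natDegree_X_sq_sub_C_mul_X]; norm_num)

theorem degree_squarePart_comp (t : ℚ) :
    ((squarePart t).comp (X ^ 2 - C 15 * X)).degree = 8 := by
  refine (degree_eq_iff_natDegree_eq_of_pos (by norm_num : 0 < 8)).mpr ?_
  rw [natDegree_comp, natDegree_squarePart, natDegree_X_sq_sub_C_mul_X]

theorem natDegree_remainderPart_comp_le (t : ℚ) :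
    ((remainderPart t).comp (X ^ 2 - C 15 * X)).natDegree ≤ 6 := by
  rw [natDegree_comp, natDegree_X_sq_sub_C_mul_X]
  exact Nat.mul_le_mul_right 2 natDegree_cubic_le

theorem degree_remainderPart_comp {t : ℚ} (ht : remainderLeadingCoeff.eval t ≠ 0) :
    ((remainderPart t).comp (X ^ 2 - C 15 * X)).degree = 6 := by
  refine (degree_eq_iff_natDegree_eq_of_pos (by norm_num : 0 < 6)).mpr ?_
  rw [natDegree_comp, natDegree_X_sq_sub_C_mul_X, remainderPart, natDegree_cubic ht]

theorem eq_comp_of_sq_sub_eq_prod {t : ℚ} {g H : ℚ[X]} (hg : g.Monic) (hgd : g.degree = 8)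
    (hH : H.degree ≤ 6)
    (h : (X ^ 2 - C 15 * X + C (4 * t)) * ∏ i ∈ Icc (1 : ℕ) 14, (X - C (i : ℚ)) = g ^ 2 - H) :
    g = (squarePart t).comp (X ^ 2 - C 15 * X) ∧ H = (remainderPart t).comp (X ^ 2 - C 15 * X) :=
  hg.eq_of_sq_sub_eq_sq_sub (monic_squarePart_comp t) hgd (degree_squarePart_comp t)
    (hH.trans_lt (by norm_num))
    ((degree_le_of_natDegree_le (natDegree_remainderPart_comp_le t)).trans_lt (by norm_num))
    (h.symm.trans (sq_sub_eq_prod t).symm)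

theorem unique_square_decomposition_deg6 :
    (∀ t : ℚ, ∃! p : Polynomial ℚ × Polynomial ℚ,
      p.1.Monic ∧ p.1.degree = 8 ∧ p.2.degree ≤ 6 ∧
      (X^2 - C 15 * X + C (4*t)) * ∏ i ∈ Finset.Icc (1:ℕ) 14, (X - C (i : ℚ)) =
        p.1^2 - p.2) ∧
    {t : ℚ | ¬ ∀ g H : Polynomial ℚ,
      (g.Monic ∧ g.degree = 8 ∧ H.degree ≤ 6 ∧
        (X^2 - C 15 * X + C (4*t)) * ∏ i ∈ Finset.Icc (1:ℕ) 14, (X - C (i : ℚ)) =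
          g^2 - H) → H.degree = 6}.Finite := by
  constructor
  · intro t
    refine ⟨((squarePart t).comp (X ^ 2 - C 15 * X), (remainderPart t).comp (X ^ 2 - C 15 * X)),
      ⟨monic_squarePart_comp t, degree_squarePart_comp t,
        degree_le_of_natDegree_le (natDegree_remainderPart_comp_le t), (sq_sub_eq_prod t).symm⟩, ?_⟩
    rintro ⟨g, H⟩ ⟨hg, hgd, hH, h⟩
    obtain ⟨rfl, rfl⟩ := eq_comp_of_sq_sub_eq_prod hg hgd hH h
    rfl
  · refine (finite_setOfPred_isRoot remainderLeadingCoeff_ne_zero).subset fun t ht => ?_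
    by_contra hroot
    exact ht fun g H ⟨hg, hgd, hH, h⟩ =>
      (eq_comp_of_sq_sub_eq_prod hg hgd hH h).2 ▸ degree_remainderPart_comp hroot
end

section
/- For every rational A, setting p = 181144A^2 + 85170A - 42585, q = 59140A^2 - 118280A - 164589, r = 17230A^2 - 112505A - 128454, s = 52874A^2 + 102845A + 68010, u = 59140A^2 + 122004A + 42585, v = 43984A^2 + 104070A + 75675, w = 15790A^2 + 107955A + 99984, the three identities -14p^2 + 77q^2 - 162r^2 + 154s^2 = 55u^2, -21p^2 + 110q^2 - 210r^2 + 154s^2 = 33v^2, and -60p^2 + 308q^2 - 567r^2 + 385s^2 = 66w^2 hold. -/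
theorem parametric_solution_of_system (A p q r s u v w : ℚ)
    (hp : p = 181144*A^2 + 85170*A - 42585)
    (hq : q = 59140*A^2 - 118280*A - 164589)
    (hr : r = 17230*A^2 - 112505*A - 128454)
    (hs : s = 52874*A^2 + 102845*A + 68010)
    (hu : u = 59140*A^2 + 122004*A + 42585)
    (hv : v = 43984*A^2 + 104070*A + 75675)
    (hw : w = 15790*A^2 + 107955*A + 99984) :
    -14*p^2 + 77*q^2 - 162*r^2 + 154*s^2 = 55*u^2 ∧
    -21*p^2 + 110*q^2 - 210*r^2 + 154*s^2 = 33*v^2 ∧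
    -60*p^2 + 308*q^2 - 567*r^2 + 385*s^2 = 66*w^2 := by
  subst hp hq hr hs hu hv hw; refine ⟨by ring, by ring, by ring⟩
end

section
/- For every rational A, define g_A(x) = b3*(x(x-15))^3 + b2*(x(x-15))^2 + b1*x(x-15) + b0 with b0 = 36(128941675300A^4 + 235814377620A^3 + 34730973441A^2 - 216866857320A - 132565503600), b1 = 4(A-1)(254A+219)(354070194A^2 + 848446325A + 620203644), b2 = (A-1)(254A+219)(35708622A^2 + 96399845A + 73722213), b3 = 4(A-1)(254A+219)(72474A^2 + 210275A + 164709). Then g_A(i) is a square of a rational number for every i in {1, 2, ..., 14}. -/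
def b0 (A : ℚ) : ℚ := 36*(128941675300*A^4 + 235814377620*A^3 + 34730973441*A^2 - 216866857320*A - 132565503600)
def b1 (A : ℚ) : ℚ := 4*(A-1)*(254*A+219)*(354070194*A^2 + 848446325*A + 620203644)
def b2 (A : ℚ) : ℚ := (A-1)*(254*A+219)*(35708622*A^2 + 96399845*A + 73722213)
def b3 (A : ℚ) : ℚ := 4*(A-1)*(254*A+219)*(72474*A^2 + 210275*A + 164709)

def gA (A x : ℚ) : ℚ :=
  b3 A * (x*(x-15))^3 + b2 A * (x*(x-15))^2 + b1 A * (x*(x-15)) + b0 A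

theorem gA_square_values (A : ℚ) :
    ∀ i ∈ Finset.Icc (1:ℕ) 14, ∃ y : ℚ, gA A (i : ℚ) = y^2 := by
  intro i hi
  simp only [Finset.mem_Icc] at hi
  obtain ⟨h1, h2⟩ := hi
  interval_cases i
  · exact ⟨1086864*A^2 + 511020*A + (-255510), by unfold gA b0 b1 b2 b3; push_cast; ring⟩
  · exact ⟨354840*A^2 + (-709680)*A + (-987534), by unfold gA b0 b1 b2 b3; push_cast; ring⟩
  · exact ⟨103380*A^2 + (-675030)*A + (-770724), by unfold gA b0 b1 b2 b3; push_cast; ring⟩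
  · exact ⟨317244*A^2 + 617070*A + 408060, by unfold gA b0 b1 b2 b3; push_cast; ring⟩
  · exact ⟨354840*A^2 + 732024*A + 255510, by unfold gA b0 b1 b2 b3; push_cast; ring⟩
  · exact ⟨263904*A^2 + 624420*A + 454050, by unfold gA b0 b1 b2 b3; push_cast; ring⟩
  · exact ⟨94740*A^2 + 647730*A + 599904, by unfold gA b0 b1 b2 b3; push_cast; ring⟩
  · exact ⟨94740*A^2 + 647730*A + 599904, by unfold gA b0 b1 b2 b3; push_cast; ring⟩
  · exact ⟨263904*A^2 + 624420*A + 454050, by unfold gA b0 b1 b2 b3; push_cast; ring⟩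
  · exact ⟨354840*A^2 + 732024*A + 255510, by unfold gA b0 b1 b2 b3; push_cast; ring⟩
  · exact ⟨317244*A^2 + 617070*A + 408060, by unfold gA b0 b1 b2 b3; push_cast; ring⟩
  · exact ⟨103380*A^2 + (-675030)*A + (-770724), by unfold gA b0 b1 b2 b3; push_cast; ring⟩
  · exact ⟨354840*A^2 + (-709680)*A + (-987534), by unfold gA b0 b1 b2 b3; push_cast; ring⟩
  · exact ⟨1086864*A^2 + 511020*A + (-255510), by unfold gA b0 b1 b2 b3; push_cast; ring⟩
end

section
/- Let h(x) = 1664*(x(x-19))^3 + 321792*(x(x-19))^2 + 18892800*x(x-19) + 358043904. Then h(i) is a square of an integer for every i in {1, 2, ..., 18}. -/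
theorem eighteen_square_values :
    ∀ x ∈ Finset.Icc (1:ℤ) 18,
      ∃ y : ℤ, 1664*(x*(x-19))^3 + 321792*(x*(x-19))^2 + 18892800*(x*(x-19)) + 358043904 = y^2 := by
  intro x hx
  obtain ⟨h1, h2⟩ := Finset.mem_Icc.mp hx
  interval_cases x
  · exact ⟨10608, by norm_num⟩
  · exact ⟨4720, by norm_num⟩
  · exact ⟨2928, by norm_num⟩
  · exact ⟨4848, by norm_num⟩
  · exact ⟨6448, by norm_num⟩
  · exact ⟨7248, by norm_num⟩
  · exact ⟨7440, by norm_num⟩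
  · exact ⟨7312, by norm_num⟩
  · exact ⟨7152, by norm_num⟩
  · exact ⟨7152, by norm_num⟩
  · exact ⟨7312, by norm_num⟩
  · exact ⟨7440, by norm_num⟩
  · exact ⟨7248, by norm_num⟩
  · exact ⟨6448, by norm_num⟩
  · exact ⟨4848, by norm_num⟩
  · exact ⟨2928, by norm_num⟩
  · exact ⟨4720, by norm_num⟩
  · exact ⟨10608, by norm_num⟩
end
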